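/- arXiv:2012.14001 — 8 statements merged into one kernel-verified Lean document; each statement's English description precedes it below -/
import Mathlib

section
/- Let V_1, …, V_k be complex n × m matrices with Σ_{r=1}^k V_rᴴ * V_r = 1_m, and let Φ : Matrix n n ℂ → Matrix m m ℂ be Φ(a) = Σ_r V_rᴴ * a * V_r, with trace-dual Φ*(b) = Σ_r V_r * b * V_rᴴ. Let ρ_B ∈ Matrix m m ℂ be positive definite with Tr ρ_B = 1 and suppose ρ_A := Φ*(ρ_B) is positive definite. Then the Petz dual map Φ^P(b) := ρ_A^{-1/2} * Φ*(ρ_B^{1/2} * b * ρ_B^{1/2}) * ρ_A^{-1/2} is unital (Φ^P(1_m) = 1_n), completely positive, and is the unique linear map from Matrix m m ℂ to Matrix n n ℂ satisfying the alternate-inner-product duality Tr(ρ_B^{1/2} * b * ρ_B^{1/2} * Φ(a)) = Tr(ρ_A^{1/2} * Φ^P(b) * ρ_A^{1/2} * a) for all a ∈ Matrix n n ℂ and b ∈ Matrix m m ℂ. -/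
open Matrix
open scoped ComplexOrder

/-- A linear map between complex matrix algebras is completely positive if for every `k ≥ 1`
its blockwise application to `k × k` block matrices sends positive semidefinite matrices to
positive semidefinite matrices. -/
def IsCP {n m : Type*} [Fintype n] [Fintype m]
    (Φ : Matrix n n ℂ → Matrix m m ℂ) : Prop :=
  ∀ (k : ℕ) (M : Matrix (n × Fin k) (n × Fin k) ℂ), M.PosSemidef →
    (Matrix.of fun p q : m × Fin k =>
      Φ (Matrix.of fun i j => M (i, p.2) (j, q.2)) p.1 q.1).PosSemidef

/-- The positive semidefinite square root of a positive semidefinite matrix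
(the definition `Matrix.PosSemidef.sqrt` of the older Mathlib, since removed). -/
noncomputable def Matrix.PosSemidef.sqrt {n : Type*} [Fintype n] [DecidableEq n]
    {𝕜 : Type*} [RCLike 𝕜] {A : Matrix n n 𝕜} (hA : A.PosSemidef) : Matrix n n 𝕜 :=
  hA.1.eigenvectorUnitary.1 * diagonal ((↑) ∘ (√·) ∘ hA.1.eigenvalues) *
  (star hA.1.eigenvectorUnitary : Matrix n n 𝕜)

/-! The Petz dual is the Kraus map with operators `ρ_A^{-1/2} V_r ρ_B^{1/2}`, hence completely
positive. Conjugating it by `ρ_A^{1/2}` gives back `Φ*(ρ_B^{1/2} b ρ_B^{1/2})`; the duality is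
then cyclicity of the trace, unitality is `Φ*(ρ_B) = ρ_A`, and uniqueness holds because the
trace pairing is nondegenerate and `ρ_A^{1/2}` is invertible. -/

namespace Matrix.PosSemidef

open scoped MatrixOrder

variable {n 𝕜 : Type*} [Fintype n] [DecidableEq n] [RCLike 𝕜] {A : Matrix n n 𝕜}

theorem sqrt_eq_cfcSqrt (hA : A.PosSemidef) : hA.sqrt = CFC.sqrt A := by
  rw [CFC.sqrt_eq_real_sqrt A hA.nonneg, cfcₙ_eq_cfc, hA.1.cfc_eq, IsHermitian.cfc,
    Unitary.conjStarAlgAut_apply]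
  rfl

theorem sqrt_mul_sqrt (hA : A.PosSemidef) : hA.sqrt * hA.sqrt = A := by
  rw [sqrt_eq_cfcSqrt, CFC.sqrt_mul_sqrt_self A hA.nonneg]

theorem conjTranspose_sqrt (hA : A.PosSemidef) : hA.sqrtᴴ = hA.sqrt := by
  rw [sqrt_eq_cfcSqrt]
  exact (CFC.sqrt_nonneg A).posSemidef.isHermitian

theorem _root_.Matrix.PosDef.isUnit_det_sqrt (hA : A.PosDef) : IsUnit hA.posSemidef.sqrt.det :=
  (isUnit_iff_isUnit_det _).mp <| isUnit_of_mul_isUnit_left <|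
    hA.posSemidef.sqrt_mul_sqrt ▸ hA.isUnit

end Matrix.PosSemidef

section Kraus

open scoped Kronecker

variable {ι p q : Type*} [Fintype ι] [Fintype p] [Fintype q]

def krausMap (K : ι → Matrix p q ℂ) (a : Matrix p p ℂ) : Matrix q q ℂ :=
  ∑ r, (K r)ᴴ * a * K r

def krausDual (K : ι → Matrix p q ℂ) (b : Matrix q q ℂ) : Matrix p p ℂ :=
  ∑ r, K r * b * (K r)ᴴ

theorem trace_mul_krausMap (K : ι → Matrix p q ℂ) (a : Matrix p p ℂ) (b : Matrix q q ℂ) :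
    (b * krausMap K a).trace = (krausDual K b * a).trace := by
  simp only [krausMap, krausDual, Finset.mul_sum, Finset.sum_mul, trace_sum]
  refine Finset.sum_congr rfl fun r _ => ?_
  rw [← Matrix.mul_assoc, trace_mul_comm]
  simp only [Matrix.mul_assoc]

theorem mul_krausDual_mul {p' q' : Type*} [Fintype q'] (K : ι → Matrix p q ℂ)
    (A : Matrix p' p ℂ) (B : Matrix q q' ℂ) (b : Matrix q' q' ℂ) :
    A * krausDual K (B * b * Bᴴ) * Aᴴ = krausDual (fun r => A * K r * B) b := by
  rw [krausDual, krausDual, Matrix.mul_sum, Matrix.sum_mul]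
  simp only [conjTranspose_mul, Matrix.mul_assoc]

/-- Blockwise, `krausDual K` is the Kraus map with operators `K r ⊗ 1`. -/
theorem isCP_krausDual [DecidableEq p] [DecidableEq q] (K : ι → Matrix p q ℂ) :
    IsCP (krausDual K) := by
  intro k M hM
  have hblock : (Matrix.of fun x y : p × Fin k =>
      krausDual K (Matrix.of fun i j => M (i, x.2) (j, y.2)) x.1 y.1) =
      ∑ r, (K r ⊗ₖ (1 : Matrix (Fin k) (Fin k) ℂ)) * M *
        (K r ⊗ₖ (1 : Matrix (Fin k) (Fin k) ℂ))ᴴ := by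
    ext x y
    simp only [of_apply, krausDual, Matrix.sum_apply]
    refine Finset.sum_congr rfl fun r _ => ?_
    simp [Matrix.mul_apply, one_apply, Fintype.sum_prod_type, apply_ite, Finset.sum_mul]
  rw [hblock]
  exact posSemidef_sum _ fun r _ => hM.mul_mul_conjTranspose_same _

end Kraus

theorem petz_dual_unital_CP_unique_general
    {n m k : ℕ} (V : Fin k → Matrix (Fin n) (Fin m) ℂ)
    (ρB : Matrix (Fin m) (Fin m) ℂ) (hρB : ρB.PosDef)
    (hρA : (∑ r, V r * ρB * (V r)ᴴ).PosDef) :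
    let sB := hρB.posSemidef.sqrt
    let sA := hρA.posSemidef.sqrt
    let ΦP : Matrix (Fin m) (Fin m) ℂ → Matrix (Fin n) (Fin n) ℂ :=
      fun b => sA⁻¹ * (∑ r, V r * (sB * b * sB) * (V r)ᴴ) * sA⁻¹
    ΦP 1 = 1 ∧ IsCP ΦP ∧
    (∀ (a : Matrix (Fin n) (Fin n) ℂ) (b : Matrix (Fin m) (Fin m) ℂ),
      (sB * b * sB * (∑ r, (V r)ᴴ * a * V r)).trace = (sA * ΦP b * sA * a).trace) ∧
    (∀ Ψ : Matrix (Fin m) (Fin m) ℂ →ₗ[ℂ] Matrix (Fin n) (Fin n) ℂ,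
      (∀ (a : Matrix (Fin n) (Fin n) ℂ) (b : Matrix (Fin m) (Fin m) ℂ),
        (sB * b * sB * (∑ r, (V r)ᴴ * a * V r)).trace = (sA * Ψ b * sA * a).trace) →
      ∀ b, Ψ b = ΦP b) := by
  intro sB sA ΦP
  have hsA : IsUnit sA.det := hρA.isUnit_det_sqrt
  have hsB : sBᴴ = sB := hρB.posSemidef.conjTranspose_sqrt
  have hsA_inv : sA⁻¹ᴴ = sA⁻¹ := by
    rw [conjTranspose_nonsing_inv, hρA.posSemidef.conjTranspose_sqrt]
  have hcancel : ∀ X Y, sA * X * sA = sA * Y * sA → X = Y := fun X Y h =>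
    ((isUnit_iff_isUnit_det sA).mpr hsA).mul_left_cancel
      (((isUnit_iff_isUnit_det sA).mpr hsA).mul_right_cancel h)
  have hconj : ∀ b, sA * ΦP b * sA = krausDual V (sB * b * sB) := fun b => by
    change sA * (sA⁻¹ * krausDual V (sB * b * sB) * sA⁻¹) * sA = _
    rw [Matrix.mul_assoc, nonsing_inv_mul_cancel_right _ _ hsA,
      mul_nonsing_inv_cancel_left _ _ hsA]
  have hdual : ∀ a b, (sB * b * sB * krausMap V a).trace = (sA * ΦP b * sA * a).trace :=
    fun a b => by rw [hconj, trace_mul_krausMap]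
  have hΦP : ΦP = krausDual (fun r => sA⁻¹ * V r * sB) := funext fun b => by
    rw [← mul_krausDual_mul, hsB, hsA_inv]
    rfl
  refine ⟨hcancel _ _ ?_, hΦP ▸ isCP_krausDual _, hdual, fun Ψ hΨ b => hcancel _ _ ?_⟩
  · rw [hconj, Matrix.mul_one, Matrix.mul_one, hρB.posSemidef.sqrt_mul_sqrt,
      hρA.posSemidef.sqrt_mul_sqrt]
    rfl
  · exact ext_iff_trace_mul_right.mpr fun a => (hΨ a b).symm.trans (hdual a b)

/-- The Petz dual map is unital, completely positive, and is the unique linear map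
satisfying the alternate-inner-product duality with the error map. -/
theorem petz_dual_unital_CP_unique
    {n m k : ℕ} (V : Fin k → Matrix (Fin n) (Fin m) ℂ)
    (hV : ∑ r, (V r)ᴴ * V r = 1)
    (ρB : Matrix (Fin m) (Fin m) ℂ) (hρB : ρB.PosDef) (hρBtr : ρB.trace = 1)
    (hρA : (∑ r, V r * ρB * (V r)ᴴ).PosDef) :
    let sB := hρB.posSemidef.sqrt
    let sA := hρA.posSemidef.sqrt
    let ΦP : Matrix (Fin m) (Fin m) ℂ → Matrix (Fin n) (Fin n) ℂ :=
      fun b => sA⁻¹ * (∑ r, V r * (sB * b * sB) * (V r)ᴴ) * sA⁻¹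
    ΦP 1 = 1 ∧ IsCP ΦP ∧
    (∀ (a : Matrix (Fin n) (Fin n) ℂ) (b : Matrix (Fin m) (Fin m) ℂ),
      (sB * b * sB * (∑ r, (V r)ᴴ * a * V r)).trace = (sA * ΦP b * sA * a).trace) ∧
    (∀ Ψ : Matrix (Fin m) (Fin m) ℂ →ₗ[ℂ] Matrix (Fin n) (Fin n) ℂ,
      (∀ (a : Matrix (Fin n) (Fin n) ℂ) (b : Matrix (Fin m) (Fin m) ℂ),
        (sB * b * sB * (∑ r, (V r)ᴴ * a * V r)).trace = (sA * Ψ b * sA * a).trace) →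
      ∀ b, Ψ b = ΦP b) :=
  petz_dual_unital_CP_unique_general V ρB hρB hρA
end

section
/- For every unital star-subalgebra S of Matrix n n ℂ there exists a unique trace-preserving conditional expectation E from Matrix n n ℂ onto S, i.e. a unique conditional expectation onto S satisfying Tr(E(a)) = Tr(a) for all a ∈ Matrix n n ℂ. -/
open Matrix
open scoped ComplexOrder

/-- A conditional expectation onto a unital star-subalgebra `S` (given by its carrier set)
is a unital completely positive linear map with range inside `S`, fixing every element of
`S`, and satisfying the `S`-bimodule property. -/
def IsCondExpOn {d : Type*} [Fintype d] [DecidableEq d] (S : Set (Matrix d d ℂ))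
    (E : Matrix d d ℂ → Matrix d d ℂ) : Prop :=
  (∀ x y, E (x + y) = E x + E y) ∧
  (∀ (z : ℂ) (x : Matrix d d ℂ), E (z • x) = z • E x) ∧
  E 1 = 1 ∧
  IsCP E ∧
  (∀ x, E x ∈ S) ∧
  (∀ c ∈ S, E c = c) ∧
  (∀ c₁ ∈ S, ∀ c₂ ∈ S, ∀ x, E (c₁ * x * c₂) = c₁ * E x * c₂)

/-!
The expectation is the orthogonal projection `P` onto `S` for the Hilbert–Schmidt inner product
`⟪a, b⟫ = tr (aᴴ b)`. It is forced: if `E` is trace preserving with values in `S` and `E (t x) =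
t E x` for `t ∈ S`, then `tr (tᴴ (x - E x)) = tr (tᴴ x) - tr (E (tᴴ x)) = 0`, so `x - E x ⊥ S`.
Conversely `P` has all the properties; the only non-formal one is positivity. If `x ≥ 0` and
`y = P x`, the negative part `y⁻` is a continuous function of `y`, hence lies in `S`, so
`0 ≤ tr (y⁻ x) = tr (y⁻ y) = -tr ((y⁻)²)`, which forces `y⁻ = 0`. Complete positivity follows
because the blockwise application of `P` is the projection onto the block matrices with entries
in `S`, again a star-subalgebra.
-/

open scoped InnerProductSpace

namespace Matrix

variable {d : Type*} [Fintype d]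

noncomputable def toEuclideanHS : Matrix d d ℂ ≃ₗ[ℂ] EuclideanSpace ℂ (d × d) where
  toFun a := WithLp.toLp 2 fun p => a p.1 p.2
  invFun v := of fun i j => v (i, j)
  map_add' _ _ := rfl
  map_smul' _ _ := rfl
  left_inv _ := rfl
  right_inv _ := rfl

lemma inner_toEuclideanHS (a b : Matrix d d ℂ) :
    ⟪toEuclideanHS a, toEuclideanHS b⟫_ℂ = (aᴴ * b).trace := by
  simp only [PiLp.inner_apply, RCLike.inner_apply, trace, diag, mul_apply, conjTranspose_apply,
    toEuclideanHS, Fintype.sum_prod_type, mul_comm]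
  exact Finset.sum_comm

noncomputable def hsProj (V : Submodule ℂ (Matrix d d ℂ)) : Matrix d d ℂ →ₗ[ℂ] Matrix d d ℂ :=
  toEuclideanHS.symm.toLinearMap ∘ₗ
    (V.map toEuclideanHS.toLinearMap).starProjection.toLinearMap ∘ₗ toEuclideanHS.toLinearMap

lemma hsProj_eq_iff {V : Submodule ℂ (Matrix d d ℂ)} {x z : Matrix d d ℂ} :
    hsProj V x = z ↔ z ∈ V ∧ ∀ t ∈ V, (tᴴ * (x - z)).trace = 0 := by
  have orth_iff : (∀ t ∈ V, (tᴴ * (x - z)).trace = 0) ↔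
      ∀ w ∈ V.map toEuclideanHS.toLinearMap, ⟪toEuclideanHS x - toEuclideanHS z, w⟫_ℂ = 0 := by
    simp only [Submodule.mem_map, LinearEquiv.coe_coe, forall_exists_index, and_imp,
      forall_apply_eq_imp_iff₂, ← map_sub, inner_eq_zero_symm (x := toEuclideanHS (x - z)),
      inner_toEuclideanHS]
  rw [orth_iff, hsProj, LinearMap.comp_apply, LinearMap.comp_apply, LinearEquiv.coe_coe,
    LinearEquiv.symm_apply_eq]
  constructor
  · intro h
    refine ⟨?_, h ▸ Submodule.starProjection_inner_eq_zero _⟩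
    obtain ⟨t, ht, hzt⟩ := h ▸ Submodule.starProjection_apply_mem _ (toEuclideanHS x)
    exact toEuclideanHS.injective hzt ▸ ht
  · rintro ⟨hz, horth⟩
    exact Submodule.eq_starProjection_of_mem_of_inner_eq_zero ⟨z, hz, rfl⟩ horth

open scoped MatrixOrder in
lemma PosSemidef.trace_mul_nonneg {𝕜 : Type*} [RCLike 𝕜] [DecidableEq d] {A B : Matrix d d 𝕜}
    (hA : A.PosSemidef) (hB : B.PosSemidef) : 0 ≤ (A * B).trace := by
  have hsqrt : (CFC.sqrt A)ᴴ = CFC.sqrt A := (CFC.sqrt_nonneg A).posSemidef.1.eq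
  calc 0 ≤ ((CFC.sqrt A)ᴴ * B * CFC.sqrt A).trace :=
        (hB.conjTranspose_mul_mul_same _).trace_nonneg
    _ = (A * B).trace := by
        rw [hsqrt, trace_mul_comm, ← mul_assoc, CFC.sqrt_mul_sqrt_self A hA.nonneg]

section Blocks

lemma submatrix_mul_prod {R ι l m n κ ν : Type*} [Fintype m] [Fintype κ]
    [NonUnitalNonAssocSemiring R] (A : Matrix (l × ι) (m × κ) R) (B : Matrix (m × κ) (n × ν) R)
    (p : ι) (q : ν) :
    (A * B).submatrix (·, p) (·, q) =
      ∑ r : κ, A.submatrix (·, p) (·, r) * B.submatrix (·, r) (·, q) := by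
  ext i j
  simp only [submatrix_apply, mul_apply, sum_apply, Fintype.sum_prod_type]
  exact Finset.sum_comm

variable {ι : Type*} [Fintype ι]

lemma trace_conjTranspose_mul_eq_sum_blocks (A B : Matrix (d × ι) (d × ι) ℂ) :
    (Aᴴ * B).trace =
      ∑ p, ∑ q, ((A.submatrix (·, p) (·, q))ᴴ * B.submatrix (·, p) (·, q)).trace := by
  simp only [trace, diag, mul_apply, conjTranspose_apply, submatrix_apply, Fintype.sum_prod_type]
  rw [Finset.sum_comm]
  conv_rhs => rw [Finset.sum_comm]
  exact Finset.sum_congr rfl fun _ _ => Finset.sum_comm_cycle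

variable [DecidableEq d] [DecidableEq ι]

variable (ι) in
/-- The amplification `M_ι(S) ≅ M_ι ⊗ S`. -/
def amplification (S : StarSubalgebra ℂ (Matrix d d ℂ)) :
    StarSubalgebra ℂ (Matrix (d × ι) (d × ι) ℂ) where
  carrier := {M | ∀ p q, M.submatrix (·, p) (·, q) ∈ S}
  add_mem' ha hb p q := add_mem (ha p q) (hb p q)
  mul_mem' ha hb p q := by
    rw [submatrix_mul_prod]
    exact sum_mem fun r _ => mul_mem (ha p r) (hb r q)
  algebraMap_mem' z p q := by
    have hblock : (algebraMap ℂ (Matrix (d × ι) (d × ι) ℂ) z).submatrix (·, p) (·, q) =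
        if p = q then algebraMap ℂ (Matrix d d ℂ) z else 0 := by
      ext i j
      split_ifs with h <;> simp [algebraMap_matrix_apply, Prod.ext_iff, h]
    rw [hblock]
    split_ifs
    exacts [S.algebraMap_mem z, S.zero_mem]
  star_mem' ha p q := by
    rw [star_eq_conjTranspose, ← conjTranspose_submatrix]
    exact star_mem (ha q p)

end Blocks

variable [DecidableEq d]

noncomputable def traceCondExp (S : StarSubalgebra ℂ (Matrix d d ℂ)) :
    Matrix d d ℂ →ₗ[ℂ] Matrix d d ℂ :=
  hsProj (Subalgebra.toSubmodule S.toSubalgebra)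

variable {S : StarSubalgebra ℂ (Matrix d d ℂ)}

lemma traceCondExp_eq_iff {x z : Matrix d d ℂ} :
    traceCondExp S x = z ↔ z ∈ S ∧ ∀ t ∈ S, (tᴴ * (x - z)).trace = 0 :=
  hsProj_eq_iff

lemma traceCondExp_mem (x : Matrix d d ℂ) : traceCondExp S x ∈ S :=
  (traceCondExp_eq_iff.1 rfl).1

lemma trace_conjTranspose_mul_sub_traceCondExp {t : Matrix d d ℂ} (ht : t ∈ S)
    (x : Matrix d d ℂ) : (tᴴ * (x - traceCondExp S x)).trace = 0 :=
  (traceCondExp_eq_iff.1 rfl).2 t ht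

lemma traceCondExp_of_mem {c : Matrix d d ℂ} (hc : c ∈ S) : traceCondExp S c = c :=
  traceCondExp_eq_iff.2 ⟨hc, by simp⟩

lemma trace_traceCondExp (x : Matrix d d ℂ) : (traceCondExp S x).trace = x.trace := by
  have h := trace_conjTranspose_mul_sub_traceCondExp S.one_mem x
  rwa [conjTranspose_one, one_mul, trace_sub, sub_eq_zero, eq_comm] at h

lemma traceCondExp_mul_mul {c₁ c₂ : Matrix d d ℂ} (hc₁ : c₁ ∈ S) (hc₂ : c₂ ∈ S)
    (x : Matrix d d ℂ) : traceCondExp S (c₁ * x * c₂) = c₁ * traceCondExp S x * c₂ := by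
  refine traceCondExp_eq_iff.2 ⟨mul_mem (mul_mem hc₁ (traceCondExp_mem x)) hc₂, fun t ht => ?_⟩
  calc (tᴴ * (c₁ * x * c₂ - c₁ * traceCondExp S x * c₂)).trace
      = (c₂ * (tᴴ * c₁ * (x - traceCondExp S x))).trace := by
        rw [trace_mul_comm c₂]; noncomm_ring
    _ = ((c₁ᴴ * t * c₂ᴴ)ᴴ * (x - traceCondExp S x)).trace := by
        simp only [conjTranspose_mul, conjTranspose_conjTranspose, mul_assoc]
    _ = 0 := trace_conjTranspose_mul_sub_traceCondExp
          (mul_mem (mul_mem (star_mem hc₁) ht) (star_mem hc₂)) x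

lemma traceCondExp_conjTranspose (x : Matrix d d ℂ) :
    traceCondExp S xᴴ = (traceCondExp S x)ᴴ := by
  refine traceCondExp_eq_iff.2 ⟨star_mem (traceCondExp_mem x), fun t ht => ?_⟩
  calc (tᴴ * (xᴴ - (traceCondExp S x)ᴴ)).trace
      = star ((tᴴᴴ * (x - traceCondExp S x)).trace) := by
        rw [← trace_conjTranspose, conjTranspose_mul, conjTranspose_sub,
          conjTranspose_conjTranspose, trace_mul_comm]
    _ = 0 := by rw [trace_conjTranspose_mul_sub_traceCondExp (t := tᴴ) (star_mem ht) x, star_zero]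

open scoped MatrixOrder in
lemma posSemidef_traceCondExp {x : Matrix d d ℂ} (hx : x.PosSemidef) :
    (traceCondExp S x).PosSemidef := by
  set y := traceCondExp S x
  have hy : IsSelfAdjoint y := by
    rw [IsSelfAdjoint, star_eq_conjTranspose, ← traceCondExp_conjTranspose, hx.1.eq]
  have : IsClosed (S : Set (Matrix d d ℂ)) :=
    (Subalgebra.toSubmodule S.toSubalgebra).closed_of_finiteDimensional
  have hneg_mem : y⁻ ∈ S := cfcₙ_mem _ (traceCondExp_mem x)
  have hneg_psd : (y⁻).PosSemidef := nonneg_iff_posSemidef.1 (CFC.negPart_nonneg y)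
  have hneg_mul : y⁻ * y = -((y⁻)ᴴ * y⁻) :=
    calc y⁻ * y = y⁻ * (y⁺ - y⁻) := by rw [CFC.posPart_sub_negPart y]
      _ = -((y⁻)ᴴ * y⁻) := by rw [mul_sub, CFC.negPart_mul_posPart, zero_sub, hneg_psd.1.eq]
  have hzero : ((y⁻)ᴴ * y⁻).trace = 0 := by
    refine le_antisymm ?_ (posSemidef_conjTranspose_mul_self _).trace_nonneg
    have horth := trace_conjTranspose_mul_sub_traceCondExp hneg_mem x
    rw [hneg_psd.1.eq, mul_sub, trace_sub, sub_eq_zero, hneg_mul, trace_neg] at horth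
    simpa [horth] using hneg_psd.trace_mul_nonneg hx
  rw [trace_conjTranspose_mul_self_eq_zero_iff, CFC.negPart_eq_zero_iff y] at hzero
  exact nonneg_iff_posSemidef.1 hzero

lemma traceCondExp_amplification {ι : Type*} [Fintype ι] [DecidableEq ι]
    (M : Matrix (d × ι) (d × ι) ℂ) :
    traceCondExp (amplification ι S) M =
      of fun p q => traceCondExp S (M.submatrix (·, p.2) (·, q.2)) p.1 q.1 := by
  refine traceCondExp_eq_iff.2 ⟨fun p q => traceCondExp_mem (M.submatrix (·, p) (·, q)),
    fun t ht => ?_⟩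
  rw [trace_conjTranspose_mul_eq_sum_blocks]
  exact Finset.sum_eq_zero fun p _ => Finset.sum_eq_zero fun q _ =>
    trace_conjTranspose_mul_sub_traceCondExp (ht p q) _

lemma isCP_traceCondExp : IsCP (traceCondExp S) := fun _ M hM => by
  have h := posSemidef_traceCondExp (S := amplification _ S) hM
  rwa [traceCondExp_amplification] at h

lemma isCondExpOn_traceCondExp : IsCondExpOn S (traceCondExp S) :=
  ⟨map_add _, map_smul _, traceCondExp_of_mem S.one_mem, isCP_traceCondExp, traceCondExp_mem,
    fun _ hc => traceCondExp_of_mem hc, fun _ hc₁ _ hc₂ => traceCondExp_mul_mul hc₁ hc₂⟩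

lemma eq_traceCondExp {E : Matrix d d ℂ → Matrix d d ℂ} (hmem : ∀ x, E x ∈ S)
    (hmul : ∀ c ∈ S, ∀ x, E (c * x) = c * E x) (htr : ∀ x, (E x).trace = x.trace) :
    E = traceCondExp S := by
  funext x
  refine (traceCondExp_eq_iff.2 ⟨hmem x, fun t ht => ?_⟩).symm
  rw [mul_sub, trace_sub, ← htr (tᴴ * x), hmul tᴴ (star_mem ht), sub_self]

end Matrix

/-- For every unital star-subalgebra `S` of the complex `n × n` matrices there exists a
unique trace-preserving conditional expectation onto `S`. -/
theorem existsUnique_trace_preserving_condExp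
    {n : ℕ} (S : StarSubalgebra ℂ (Matrix (Fin n) (Fin n) ℂ)) :
    ∃! E : Matrix (Fin n) (Fin n) ℂ → Matrix (Fin n) (Fin n) ℂ,
      IsCondExpOn (S : Set (Matrix (Fin n) (Fin n) ℂ)) E ∧
      ∀ x, (E x).trace = x.trace := by
  refine ⟨traceCondExp S, ⟨isCondExpOn_traceCondExp, trace_traceCondExp⟩, ?_⟩
  rintro E ⟨⟨-, -, -, -, hmem, -, hmul⟩, htr⟩
  refine eq_traceCondExp hmem (fun c hc x => ?_) htr
  simpa using hmul c hc 1 S.one_mem x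
end

section
/- Let S be a unital star-subalgebra of Matrix n n ℂ and let ρ ∈ Matrix n n ℂ be positive definite with Tr ρ = 1. If E₁ and E₂ are both ρ-preserving conditional expectations from Matrix n n ℂ onto S, then E₁ = E₂. -/
/-!
Both `E₁ x` and `E₂ x` lie in `S`, and the bimodule property together with `ρ`-preservation gives
`Tr (ρ c E x) = Tr (ρ c x)` for every `c ∈ S`. So `d = E₁ x - E₂ x ∈ S` is orthogonal to `S` for
the form `(c, a) ↦ Tr (ρ cᴴ a)`, which is definite because `ρ` is positive definite; taking
`c = d` gives `d = 0`.
-/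

open Matrix
open scoped ComplexOrder

theorem Matrix.mul_mul_conjTranspose_apply_self {𝕜 m n : Type*} [RCLike 𝕜] [Fintype n]
    (ρ : Matrix n n 𝕜) (d : Matrix m n 𝕜) (i : m) :
    (d * ρ * dᴴ) i i = star (star (d i)) ⬝ᵥ (ρ *ᵥ star (d i)) := by
  simp only [star_star, mul_apply, dotProduct, mulVec, conjTranspose_apply, Finset.mul_sum,
    Finset.sum_mul, Pi.star_apply, mul_assoc]
  exact Finset.sum_comm

theorem Matrix.PosDef.eq_zero_of_trace_mul_mul_conjTranspose_eq_zero {𝕜 m n : Type*} [RCLike 𝕜]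
    [Fintype m] [Fintype n] {ρ : Matrix n n 𝕜} (hρ : ρ.PosDef) {d : Matrix m n 𝕜}
    (h : (d * ρ * dᴴ).trace = 0) : d = 0 := by
  have hzero : d * ρ * dᴴ = 0 :=
    (hρ.posSemidef.mul_mul_conjTranspose_same d).trace_eq_zero_iff.mp h
  ext i j
  by_contra hij
  have hrow : star (d i) ≠ 0 := fun h0 => hij (by simpa using congrFun h0 j)
  have := hρ.dotProduct_mulVec_pos hrow
  rw [← mul_mul_conjTranspose_apply_self, hzero] at this
  exact this.ne rfl

theorem Matrix.PosDef.eq_of_forall_trace_mul_mul_eq {𝕜 d : Type*} [RCLike 𝕜] [Fintype d]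
    [DecidableEq d] {ρ : Matrix d d 𝕜} (hρ : ρ.PosDef) {S : StarSubalgebra 𝕜 (Matrix d d 𝕜)}
    {a b : Matrix d d 𝕜} (ha : a ∈ S) (hb : b ∈ S)
    (h : ∀ c ∈ S, (ρ * (c * a)).trace = (ρ * (c * b)).trace) : a = b := by
  rw [← sub_eq_zero]
  apply hρ.eq_zero_of_trace_mul_mul_conjTranspose_eq_zero
  calc ((a - b) * ρ * (a - b)ᴴ).trace
      = (ρ * ((a - b)ᴴ * a)).trace - (ρ * ((a - b)ᴴ * b)).trace := by
        rw [trace_mul_cycle, trace_mul_comm, Matrix.mul_sub, Matrix.mul_sub, trace_sub]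
    _ = 0 := sub_eq_zero.mpr (h _ (star_mem (sub_mem ha hb)))

theorem IsCondExpOn.trace_mul_mul_apply {d : Type*} [Fintype d] [DecidableEq d]
    {S : StarSubalgebra ℂ (Matrix d d ℂ)} {E : Matrix d d ℂ → Matrix d d ℂ}
    (hE : IsCondExpOn (S : Set (Matrix d d ℂ)) E) {ρ : Matrix d d ℂ}
    (hρE : ∀ x, (ρ * E x).trace = (ρ * x).trace) {c : Matrix d d ℂ} (hc : c ∈ S)
    (x : Matrix d d ℂ) : (ρ * (c * E x)).trace = (ρ * (c * x)).trace := by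
  obtain ⟨-, -, -, -, -, -, hbimodule⟩ := hE
  have hleft : E (c * x) = c * E x := by
    simpa only [mul_one] using hbimodule c hc 1 S.one_mem x
  rw [← hleft, hρE]

theorem rho_preserving_condExp_unique_general
    {n : ℕ} (S : StarSubalgebra ℂ (Matrix (Fin n) (Fin n) ℂ))
    (ρ : Matrix (Fin n) (Fin n) ℂ) (hρ : ρ.PosDef)
    (E₁ E₂ : Matrix (Fin n) (Fin n) ℂ → Matrix (Fin n) (Fin n) ℂ)
    (hE₁ : IsCondExpOn (S : Set (Matrix (Fin n) (Fin n) ℂ)) E₁)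
    (hE₁ρ : ∀ x, (ρ * E₁ x).trace = (ρ * x).trace)
    (hE₂ : IsCondExpOn (S : Set (Matrix (Fin n) (Fin n) ℂ)) E₂)
    (hE₂ρ : ∀ x, (ρ * E₂ x).trace = (ρ * x).trace) :
    E₁ = E₂ := by
  have hrange₁ := hE₁.2.2.2.2.1
  have hrange₂ := hE₂.2.2.2.2.1
  funext x
  refine hρ.eq_of_forall_trace_mul_mul_eq (hrange₁ x) (hrange₂ x) fun c hc => ?_
  rw [hE₁.trace_mul_mul_apply hE₁ρ hc, hE₂.trace_mul_mul_apply hE₂ρ hc]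

/-- A `ρ`-preserving conditional expectation onto a unital star-subalgebra is unique. -/
theorem rho_preserving_condExp_unique
    {n : ℕ} (S : StarSubalgebra ℂ (Matrix (Fin n) (Fin n) ℂ))
    (ρ : Matrix (Fin n) (Fin n) ℂ) (hρ : ρ.PosDef) (hρtr : ρ.trace = 1)
    (E₁ E₂ : Matrix (Fin n) (Fin n) ℂ → Matrix (Fin n) (Fin n) ℂ)
    (hE₁ : IsCondExpOn (S : Set (Matrix (Fin n) (Fin n) ℂ)) E₁)
    (hE₁ρ : ∀ x, (ρ * E₁ x).trace = (ρ * x).trace)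
    (hE₂ : IsCondExpOn (S : Set (Matrix (Fin n) (Fin n) ℂ)) E₂)
    (hE₂ρ : ∀ x, (ρ * E₂ x).trace = (ρ * x).trace) :
    E₁ = E₂ :=
  rho_preserving_condExp_unique_general S ρ hρ E₁ E₂ hE₁ hE₁ρ hE₂ hE₂ρ
end

section
/- Let n, m be positive and let E be a conditional expectation from the matrix algebra Matrix (Fin n × Fin m) (Fin n × Fin m) ℂ onto the unital star-subalgebra { a ⊗ₖ 1_m : a ∈ Matrix (Fin n) (Fin n) ℂ }. Then there exists a unique positive semidefinite σ ∈ Matrix (Fin m) (Fin m) ℂ with Tr σ = 1 such that E(a ⊗ₖ b) = Tr(σ * b) • (a ⊗ₖ 1_m) for all a ∈ Matrix (Fin n) (Fin n) ℂ and b ∈ Matrix (Fin m) (Fin m) ℂ. -/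
open Matrix
open scoped ComplexOrder

open scoped Kronecker

/-!
The bimodule property makes `E (1 ⊗ₖ b)` commute with every `a ⊗ₖ 1`; lying itself in
`{c ⊗ₖ 1}`, it is therefore a scalar `φ b`, and `E (a ⊗ₖ b) = (a ⊗ₖ 1) * E (1 ⊗ₖ b) = φ b • (a ⊗ₖ 1)`.
Positivity and unitality of `E` make `φ` a state on the second factor, and every state on a
full matrix algebra is `b ↦ Tr (σ * b)` for a unique density matrix `σ`.
-/

theorem IsCP.posSemidef_apply {d e : Type*} [Fintype d] [Fintype e]
    {Φ : Matrix d d ℂ → Matrix e e ℂ} (hΦ : IsCP Φ) {M : Matrix d d ℂ} (hM : M.PosSemidef) :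
    (Φ M).PosSemidef :=
  (hΦ 1 _ (hM.submatrix Prod.fst)).submatrix fun q => (q, 0)

namespace Matrix

theorem kronecker_one_injective {ι κ R : Type*} [DecidableEq κ] [Nonempty κ]
    [MulZeroOneClass R] :
    Function.Injective fun c : Matrix ι ι R => c ⊗ₖ (1 : Matrix κ κ R) := by
  intro c d h
  obtain ⟨k⟩ := ‹Nonempty κ›
  ext i j
  simpa using congrFun₂ h (i, k) (j, k)

variable {κ : Type*} [Fintype κ] [DecidableEq κ]

theorem exists_trace_mul_eq {R : Type*} [CommSemiring R] (φ : Matrix κ κ R →ₗ[R] R) :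
    ∃ σ : Matrix κ κ R, ∀ b, φ b = (σ * b).trace := by
  set σ : Matrix κ κ R := of fun k l => φ (single l k 1)
  have : φ = traceLinearMap κ R R ∘ₗ LinearMap.mulLeft R σ :=
    ext_linearMap (R := R) fun i j => LinearMap.ext_ring <| by simp [σ, trace_mul_single]
  exact ⟨σ, fun b => LinearMap.congr_fun this b⟩

/-- Only over `ℂ`: a quadratic form with real values comes from a hermitian matrix. -/
theorem posSemidef_of_dotProduct_mulVec_nonneg {A : Matrix κ κ ℂ}
    (h : ∀ x, 0 ≤ star x ⬝ᵥ (A *ᵥ x)) : A.PosSemidef := by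
  rw [← isPositive_toEuclideanLin_iff, LinearMap.isPositive_iff,
    LinearMap.isSymmetric_iff_inner_map_self_real]
  have hinner (v : EuclideanSpace ℂ κ) :
      v.ofLp ⬝ᵥ star (toEuclideanLin A v).ofLp = star (star v.ofLp ⬝ᵥ A *ᵥ v.ofLp) := by
    rw [star_dotProduct, star_star, dotProduct_comm]; rfl
  simp only [EuclideanSpace.inner_eq_star_dotProduct, hinner]
  exact ⟨fun v => congrArg star (IsSelfAdjoint.of_nonneg (h _)).star_eq,
    fun v => (IsSelfAdjoint.of_nonneg (h _)).star_eq.symm ▸ h _⟩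

theorem exists_posSemidef_trace_mul_eq (φ : Matrix κ κ ℂ →ₗ[ℂ] ℂ)
    (hφ : ∀ b, b.PosSemidef → 0 ≤ φ b) :
    ∃ σ : Matrix κ κ ℂ, σ.PosSemidef ∧ ∀ b, φ b = (σ * b).trace := by
  obtain ⟨σ, hσ⟩ := exists_trace_mul_eq φ
  refine ⟨σ, posSemidef_of_dotProduct_mulVec_nonneg fun x => ?_, hσ⟩
  have : star x ⬝ᵥ σ *ᵥ x = φ (vecMulVec x (star x)) := by
    rw [hσ, mul_vecMulVec, trace_vecMulVec, dotProduct_comm]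
  exact this ▸ hφ _ (posSemidef_vecMulVec_self_star x)

end Matrix

namespace IsCondExpOn

variable {d : Type*} [Fintype d] [DecidableEq d] {S : Set (Matrix d d ℂ)}
  {E : Matrix d d ℂ → Matrix d d ℂ}

def toLinearMap (hE : IsCondExpOn S E) : Matrix d d ℂ →ₗ[ℂ] Matrix d d ℂ where
  toFun := E
  map_add' := hE.1
  map_smul' := hE.2.1

theorem map_one (hE : IsCondExpOn S E) : E 1 = 1 := hE.2.2.1

theorem posSemidef_apply (hE : IsCondExpOn S E) {M : Matrix d d ℂ} (hM : M.PosSemidef) :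
    (E M).PosSemidef :=
  hE.2.2.2.1.posSemidef_apply hM

theorem apply_mem (hE : IsCondExpOn S E) (x : Matrix d d ℂ) : E x ∈ S := hE.2.2.2.2.1 x

theorem one_mem (hE : IsCondExpOn S E) : 1 ∈ S := hE.map_one ▸ hE.apply_mem 1

theorem apply_mul_mul (hE : IsCondExpOn S E) {c₁ c₂ : Matrix d d ℂ} (hc₁ : c₁ ∈ S)
    (hc₂ : c₂ ∈ S) (x : Matrix d d ℂ) : E (c₁ * x * c₂) = c₁ * E x * c₂ :=
  hE.2.2.2.2.2.2 c₁ hc₁ c₂ hc₂ x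

theorem commute_apply (hE : IsCondExpOn S E) {c x : Matrix d d ℂ} (hc : c ∈ S)
    (hcx : Commute c x) : Commute c (E x) :=
  calc c * E x = E (c * x * 1) := by rw [hE.apply_mul_mul hc hE.one_mem, mul_one]
    _ = E (1 * x * c) := by rw [mul_one, one_mul, hcx.eq]
    _ = E x * c := by rw [hE.apply_mul_mul hE.one_mem hc, one_mul]

end IsCondExpOn

section FirstFactor

variable {ι κ : Type*} [Fintype ι] [Fintype κ] [DecidableEq ι] [DecidableEq κ]
  {E : Matrix (ι × κ) (ι × κ) ℂ → Matrix (ι × κ) (ι × κ) ℂ}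

theorem IsCondExpOn.exists_apply_one_kronecker_eq_smul_one [Nonempty κ]
    (hE : IsCondExpOn {M | ∃ a : Matrix ι ι ℂ, M = a ⊗ₖ (1 : Matrix κ κ ℂ)} E)
    (b : Matrix κ κ ℂ) : ∃ z : ℂ, E (1 ⊗ₖ b) = z • 1 := by
  obtain ⟨c, hc⟩ := hE.apply_mem (1 ⊗ₖ b)
  have hcomm (a : Matrix ι ι ℂ) : Commute a c := by
    have h := hE.commute_apply ⟨a, rfl⟩ (x := 1 ⊗ₖ b) <| by
      simp [Commute, SemiconjBy, ← mul_kronecker_mul]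
    rw [hc] at h
    exact kronecker_one_injective (by simpa [← mul_kronecker_mul] using h.eq)
  obtain ⟨z, rfl⟩ : c ∈ Set.range (scalar ι) :=
    mem_range_scalar_of_commute_single fun _ _ _ => hcomm _
  exact ⟨z, by simp [hc, ← smul_one_eq_diagonal, smul_kronecker]⟩

theorem IsCondExpOn.exists_state_apply_kronecker [Nonempty ι] [Nonempty κ]
    (hE : IsCondExpOn {M | ∃ a : Matrix ι ι ℂ, M = a ⊗ₖ (1 : Matrix κ κ ℂ)} E) :
    ∃ φ : Matrix κ κ ℂ →ₗ[ℂ] ℂ, (∀ b, b.PosSemidef → 0 ≤ φ b) ∧ φ 1 = 1 ∧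
      ∀ a b, E (a ⊗ₖ b) = φ b • (a ⊗ₖ (1 : Matrix κ κ ℂ)) := by
  inhabit ι × κ
  let φ := entryLinearMap ℂ ℂ default default ∘ₗ hE.toLinearMap ∘ₗ
    kroneckerBilinear (R := ℂ) (1 : Matrix ι ι ℂ)
  have hφ (b : Matrix κ κ ℂ) : φ b = E (1 ⊗ₖ b) default default := rfl
  refine ⟨φ, fun b hb => ?_, ?_, fun a b => ?_⟩
  · exact hφ b ▸ (hE.posSemidef_apply (PosSemidef.one.kronecker hb)).diag_nonneg
  · rw [hφ, one_kronecker_one, hE.map_one, one_apply_eq]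
  · obtain ⟨z, hz⟩ := hE.exists_apply_one_kronecker_eq_smul_one b
    have hab : a ⊗ₖ b = (a ⊗ₖ 1) * (1 ⊗ₖ b) * 1 := by simp [← mul_kronecker_mul]
    rw [hab, hE.apply_mul_mul ⟨a, rfl⟩ hE.one_mem, hφ, hz]
    simp

end FirstFactor

/-- Every conditional expectation onto the subalgebra `{ a ⊗ₖ 1 }` of a bipartite matrix
algebra is given by tracing out the second factor against a unique state `σ`. -/
theorem condExp_onto_first_factor_eq_trace_against_state
    {n m : ℕ} (hn : 0 < n) (hm : 0 < m)
    (E : Matrix (Fin n × Fin m) (Fin n × Fin m) ℂ →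
         Matrix (Fin n × Fin m) (Fin n × Fin m) ℂ)
    (hE : IsCondExpOn
        {M : Matrix (Fin n × Fin m) (Fin n × Fin m) ℂ |
          ∃ a : Matrix (Fin n) (Fin n) ℂ, M = a ⊗ₖ (1 : Matrix (Fin m) (Fin m) ℂ)} E) :
    ∃! σ : Matrix (Fin m) (Fin m) ℂ,
      σ.PosSemidef ∧ σ.trace = 1 ∧
      ∀ (a : Matrix (Fin n) (Fin n) ℂ) (b : Matrix (Fin m) (Fin m) ℂ),
        E (a ⊗ₖ b) = (σ * b).trace • (a ⊗ₖ (1 : Matrix (Fin m) (Fin m) ℂ)) := by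
  have := Fin.pos_iff_nonempty.mp hn
  have := Fin.pos_iff_nonempty.mp hm
  obtain ⟨φ, hφ_nonneg, hφ_one, hEφ⟩ := hE.exists_state_apply_kronecker
  obtain ⟨σ, hσ, hφσ⟩ := exists_posSemidef_trace_mul_eq φ hφ_nonneg
  refine ⟨σ, ⟨hσ, by rw [← mul_one σ, ← hφσ, hφ_one], fun a b => by rw [hEφ, hφσ]⟩, ?_⟩
  rintro τ ⟨-, -, hτ⟩
  refine ext_iff_trace_mul_right.mpr fun b => ?_
  have h := hτ 1 b
  rw [hEφ, hφσ, one_kronecker_one] at h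
  exact smul_left_injective ℂ one_ne_zero h.symm
end

section
/- Let V_1, …, V_k be complex n × n matrices with Σ_{r=1}^k V_rᴴ * V_r = 1, let Φ : Matrix n n ℂ → Matrix n n ℂ be Φ(a) = Σ_r V_rᴴ * a * V_r, and let ρ ∈ Matrix n n ℂ be positive definite with Tr(ρ * Φ(a)) = Tr(ρ * a) for all a. If c ∈ Matrix n n ℂ satisfies Φ(c) = c, then Φ(cᴴ * c) = cᴴ * c. Consequently the fixed points of Φ form a unital star-subalgebra of Matrix n n ℂ. -/
/-!
Write `Φ = krausMap V`. For a fixed point `c`, unitality `∑ Vᵣᴴ Vᵣ = 1` gives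
`∑ r, (c Vᵣ - Vᵣ c)ᴴ (c Vᵣ - Vᵣ c) = Φ(cᴴ c) - cᴴ c`, so the right side is positive
semidefinite. Its `ρ`-trace vanishes because `Φ` preserves `ρ`, and `ρ` is faithful, so it is zero.
Then every commutator `c Vᵣ - Vᵣ c` vanishes, and likewise for the fixed point `cᴴ`; conversely
unitality makes every element commuting with all `Vᵣ` a fixed point. So the fixed points are
exactly the commutant of `{Vᵣ, Vᵣᴴ}`, which is a unital star-subalgebra.
-/

open Matrix
open scoped ComplexOrder

namespace Matrix

variable {𝕜 n ι : Type*} [RCLike 𝕜] [Fintype n] [Fintype ι]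

theorem PosDef.eq_zero_of_trace_mul_eq_zero [DecidableEq n] {ρ M : Matrix n n 𝕜} (hρ : ρ.PosDef)
    (hM : M.PosSemidef) (h : (ρ * M).trace = 0) : M = 0 := by
  open scoped MatrixOrder in
  obtain ⟨y, hy, rfl⟩ := CStarAlgebra.isStrictlyPositive_iff_eq_star_mul_self.mp
    hρ.isStrictlyPositive
  have hconj : y * M * yᴴ = 0 := by
    refine (hM.mul_mul_conjTranspose_same y).trace_eq_zero_iff.mp ?_
    rwa [trace_mul_cycle]
  obtain ⟨u, rfl⟩ := hy
  have := congr(((u⁻¹ : (Matrix n n 𝕜)ˣ) : Matrix n n 𝕜) * $hconj * (↑u⁻¹ : Matrix n n 𝕜)ᴴ)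
  simpa [Matrix.mul_assoc, ← conjTranspose_mul] using this

theorem eq_zero_of_sum_conjTranspose_mul_self_eq_zero {m : Type*} [Fintype m]
    {A : ι → Matrix m n 𝕜} (h : ∑ r, (A r)ᴴ * A r = 0) (r : ι) : A r = 0 := by
  open scoped MatrixOrder in
  have hnonneg : ∀ s ∈ Finset.univ, 0 ≤ (A s)ᴴ * A s := fun s _ =>
    (posSemidef_conjTranspose_mul_self (A s)).nonneg
  exact conjTranspose_mul_self_eq_zero.mp
    ((Finset.sum_eq_zero_iff_of_nonneg hnonneg).mp h r (Finset.mem_univ r))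

def krausMap (V : ι → Matrix n n 𝕜) (a : Matrix n n 𝕜) : Matrix n n 𝕜 :=
  ∑ r, (V r)ᴴ * a * V r

theorem krausMap_conjTranspose (V : ι → Matrix n n 𝕜) (a : Matrix n n 𝕜) :
    krausMap V aᴴ = (krausMap V a)ᴴ := by
  simp [krausMap, conjTranspose_sum, Matrix.mul_assoc]

theorem krausMap_eq_self_of_commute [DecidableEq n] {V : ι → Matrix n n 𝕜}
    (hV : ∑ r, (V r)ᴴ * V r = 1) {c : Matrix n n 𝕜} (hc : ∀ r, Commute (V r) c) :
    krausMap V c = c := by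
  simp_rw [krausMap, Matrix.mul_assoc, ← (hc _).eq, ← Matrix.mul_assoc, ← Finset.sum_mul, hV,
    Matrix.one_mul]

theorem sum_conjTranspose_mul_commutator_of_krausMap_eq_self [DecidableEq n]
    {V : ι → Matrix n n 𝕜} (hV : ∑ r, (V r)ᴴ * V r = 1) {c : Matrix n n 𝕜} (hc : krausMap V c = c) :
    ∑ r, (c * V r - V r * c)ᴴ * (c * V r - V r * c) = krausMap V (cᴴ * c) - cᴴ * c := by
  have hc' : krausMap V cᴴ = cᴴ := by rw [krausMap_conjTranspose, hc]
  have hexpand : ∀ r, (c * V r - V r * c)ᴴ * (c * V r - V r * c) =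
      (V r)ᴴ * (cᴴ * c) * V r - (V r)ᴴ * cᴴ * V r * c - cᴴ * ((V r)ᴴ * c * V r)
        + cᴴ * ((V r)ᴴ * V r) * c := fun r => by
    simp only [conjTranspose_sub, conjTranspose_mul]
    noncomm_ring
  simp only [hexpand, Finset.sum_add_distrib, Finset.sum_sub_distrib, ← Finset.sum_mul,
    ← Finset.mul_sum, hV, Matrix.mul_one]
  rw [← krausMap, ← krausMap, ← krausMap, hc, hc']
  abel

theorem krausMap_conjTranspose_mul_self_of_eq_self [DecidableEq n] {V : ι → Matrix n n 𝕜}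
    {ρ : Matrix n n 𝕜} (hV : ∑ r, (V r)ᴴ * V r = 1) (hρ : ρ.PosDef)
    (hpres : ∀ a, (ρ * krausMap V a).trace = (ρ * a).trace) {c : Matrix n n 𝕜}
    (hc : krausMap V c = c) : krausMap V (cᴴ * c) = cᴴ * c := by
  have hpsd : (krausMap V (cᴴ * c) - cᴴ * c).PosSemidef := by
    rw [← sum_conjTranspose_mul_commutator_of_krausMap_eq_self hV hc]
    exact posSemidef_sum _ fun r _ => posSemidef_conjTranspose_mul_self _
  have htrace : (ρ * (krausMap V (cᴴ * c) - cᴴ * c)).trace = 0 := by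
    rw [Matrix.mul_sub, trace_sub, hpres, sub_self]
  exact sub_eq_zero.mp (hρ.eq_zero_of_trace_mul_eq_zero hpsd htrace)

theorem commute_of_krausMap_eq_self [DecidableEq n] {V : ι → Matrix n n 𝕜}
    {ρ : Matrix n n 𝕜} (hV : ∑ r, (V r)ᴴ * V r = 1) (hρ : ρ.PosDef)
    (hpres : ∀ a, (ρ * krausMap V a).trace = (ρ * a).trace) {c : Matrix n n 𝕜}
    (hc : krausMap V c = c) (r : ι) : Commute (V r) c := by
  have hsum : ∑ r, (c * V r - V r * c)ᴴ * (c * V r - V r * c) = 0 := by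
    rw [sum_conjTranspose_mul_commutator_of_krausMap_eq_self hV hc,
      krausMap_conjTranspose_mul_self_of_eq_self hV hρ hpres hc, sub_self]
  exact (sub_eq_zero.mp (eq_zero_of_sum_conjTranspose_mul_self_eq_zero hsum r)).symm

theorem krausMap_eq_self_iff_mem_centralizer [DecidableEq n] {V : ι → Matrix n n 𝕜}
    {ρ : Matrix n n 𝕜} (hV : ∑ r, (V r)ᴴ * V r = 1) (hρ : ρ.PosDef)
    (hpres : ∀ a, (ρ * krausMap V a).trace = (ρ * a).trace) {c : Matrix n n 𝕜} :
    krausMap V c = c ↔ c ∈ StarSubalgebra.centralizer 𝕜 (Set.range V) := by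
  simp only [StarSubalgebra.mem_centralizer_iff, Set.forall_mem_range, star_eq_conjTranspose]
  refine ⟨fun hc r => ⟨commute_of_krausMap_eq_self hV hρ hpres hc r, ?_⟩,
    fun hc => krausMap_eq_self_of_commute hV fun r => (hc r).1⟩
  have hc' : krausMap V cᴴ = cᴴ := by rw [krausMap_conjTranspose, hc]
  simpa using congr_arg conjTranspose (commute_of_krausMap_eq_self hV hρ hpres hc' r).eq.symm

end Matrix

/-- For a unital completely positive map `Φ` preserving a faithful state `ρ`, any fixed
point `c` of `Φ` also satisfies `Φ(cᴴ c) = cᴴ c`; consequently the fixed points of `Φ`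
form a unital star-subalgebra. -/
theorem fixed_points_form_star_subalgebra
    {n k : ℕ} (V : Fin k → Matrix (Fin n) (Fin n) ℂ)
    (hV : ∑ r, (V r)ᴴ * V r = 1)
    (ρ : Matrix (Fin n) (Fin n) ℂ) (hρ : ρ.PosDef)
    (hpres : ∀ a : Matrix (Fin n) (Fin n) ℂ,
      (ρ * (∑ r, (V r)ᴴ * a * V r)).trace = (ρ * a).trace) :
    (∀ c : Matrix (Fin n) (Fin n) ℂ, (∑ r, (V r)ᴴ * c * V r) = c →
      (∑ r, (V r)ᴴ * (cᴴ * c) * V r) = cᴴ * c) ∧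
    ∃ S : StarSubalgebra ℂ (Matrix (Fin n) (Fin n) ℂ),
      (S : Set (Matrix (Fin n) (Fin n) ℂ)) =
        {c : Matrix (Fin n) (Fin n) ℂ | (∑ r, (V r)ᴴ * c * V r) = c} := by
  refine ⟨fun c => krausMap_conjTranspose_mul_self_of_eq_self hV hρ hpres,
    StarSubalgebra.centralizer ℂ (Set.range V), ?_⟩
  ext c
  exact (krausMap_eq_self_iff_mem_centralizer hV hρ hpres).symm
end

section
/- Let V_1, …, V_k be complex n × n matrices with Σ_{r=1}^k V_rᴴ * V_r = 1, and let Φ : Matrix n n ℂ → Matrix n n ℂ be Φ(a) = Σ_r V_rᴴ * a * V_r. Then a projection p ∈ Matrix n n ℂ (p = pᴴ = p * p) satisfies Φ(p) = p if and only if p commutes with every Kraus operator: p * V_r = V_r * p for all r. -/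
/-!
Write `Φ(x) = ∑ Vᵣᴴ x Vᵣ` and `q = 1 - p`. If `Φ(p) = p`, then unitality gives `Φ(q) = q`, and
`∑ (p Vᵣ q)ᴴ (p Vᵣ q) = q Φ(p) q = q p q = 0`; a vanishing sum of matrices `Aᴴ A` has vanishing
terms, so `p Vᵣ q = 0`, and symmetrically `q Vᵣ p = 0`. Together these say `p Vᵣ = p Vᵣ p = Vᵣ p`.
The converse is immediate from `∑ Vᵣᴴ Vᵣ = 1`.
-/

open Matrix
open scoped ComplexOrder

theorem mul_eq_mul_of_mul_mul_one_sub_eq_zero {R : Type*} [Ring R] {p v : R}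
    (h₁ : p * v * (1 - p) = 0) (h₂ : (1 - p) * v * p = 0) : p * v = v * p := by
  rw [mul_sub, mul_one, sub_eq_zero] at h₁
  rw [sub_mul, sub_mul, one_mul, sub_eq_zero] at h₂
  rw [h₁, h₂]

section StarRing

variable {R ι : Type*} [Ring R] [StarRing R] [Fintype ι] {p : R} (V : ι → R)

theorem sum_star_mul_mul_eq_of_commute (hV : ∑ i, star (V i) * V i = 1)
    (hcomm : ∀ i, p * V i = V i * p) : ∑ i, star (V i) * p * V i = p := by
  simp_rw [mul_assoc, hcomm, ← mul_assoc, ← Finset.sum_mul, hV, one_mul]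

theorem sum_star_mul_one_sub_mul_eq (hV : ∑ i, star (V i) * V i = 1)
    (hΦ : ∑ i, star (V i) * p * V i = p) : ∑ i, star (V i) * (1 - p) * V i = 1 - p := by
  simp_rw [mul_sub, sub_mul, mul_one, Finset.sum_sub_distrib, hV, hΦ]

theorem IsStarProjection.sum_star_mul_self_eq_zero (hp : IsStarProjection p)
    (hΦ : ∑ i, star (V i) * p * V i = p) :
    ∑ i, star (p * V i * (1 - p)) * (p * V i * (1 - p)) = 0 := by
  have hterm : ∀ i, star (p * V i * (1 - p)) * (p * V i * (1 - p))
      = (1 - p) * (star (V i) * p * V i) * (1 - p) := fun i => by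
    rw [star_mul, star_mul, hp.one_sub.isSelfAdjoint.star_eq, hp.isSelfAdjoint.star_eq]
    calc (1 - p) * (star (V i) * p) * (p * V i * (1 - p))
        = (1 - p) * (star (V i) * (p * p) * V i) * (1 - p) := by noncomm_ring
      _ = (1 - p) * (star (V i) * p * V i) * (1 - p) := by rw [hp.isIdempotentElem.eq]
  simp_rw [hterm, ← Finset.sum_mul, ← Finset.mul_sum, hΦ, hp.one_sub_mul_self, zero_mul]

end StarRing

theorem Matrix.eq_zero_of_sum_conjTranspose_mul_self_eq_zero_s12 {R ι m n : Type*} [CommRing R]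
    [PartialOrder R] [StarRing R] [StarOrderedRing R] [NoZeroDivisors R] [Fintype ι]
    [Fintype m] [Fintype n] {A : ι → Matrix m n R} (h : ∑ i, (A i)ᴴ * A i = 0) (i : ι) :
    A i = 0 := by
  have htrace : ∑ i, ((A i)ᴴ * A i).trace = 0 := by rw [← trace_sum, h, trace_zero]
  rw [Fintype.sum_eq_zero_iff_of_nonneg
    fun i => (posSemidef_conjTranspose_mul_self (A i)).trace_nonneg] at htrace
  exact trace_conjTranspose_mul_self_eq_zero_iff.mp (congrFun htrace i)

/-- A projection is invariant under a unital completely positive map iff it commutes with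
every Kraus operator. -/
theorem projection_invariant_iff_commutes_with_kraus
    {n k : ℕ} (V : Fin k → Matrix (Fin n) (Fin n) ℂ)
    (hV : ∑ r, (V r)ᴴ * V r = 1)
    (p : Matrix (Fin n) (Fin n) ℂ) (hp_star : p = pᴴ) (hp_idem : p = p * p) :
    (∑ r, (V r)ᴴ * p * V r) = p ↔ ∀ r, p * V r = V r * p := by
  have hp : IsStarProjection p := ⟨hp_idem.symm, hp_star.symm⟩
  refine ⟨fun hΦ r => ?_, sum_star_mul_mul_eq_of_commute V hV⟩
  have hΦq := sum_star_mul_one_sub_mul_eq V hV hΦ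
  have h₁ := eq_zero_of_sum_conjTranspose_mul_self_eq_zero_s12 (hp.sum_star_mul_self_eq_zero V hΦ) r
  have h₂ := eq_zero_of_sum_conjTranspose_mul_self_eq_zero_s12
    (hp.one_sub.sum_star_mul_self_eq_zero V hΦq) r
  rw [sub_sub_cancel] at h₂
  exact mul_eq_mul_of_mul_mul_one_sub_eq_zero h₁ h₂
end

section
/- Let V_1, …, V_k be complex n × m matrices with Σ_{r=1}^k V_rᴴ * V_r = 1_m, let Φ : Matrix n n ℂ → Matrix m m ℂ be Φ(a) = Σ_r V_rᴴ * a * V_r, and let Φ*(b) = Σ_r V_r * b * V_rᴴ be its trace-dual. Assume Φ*(1_m) = Σ_r V_r * V_rᴴ is positive definite. If c ∈ Matrix m m ℂ commutes with V_rᴴ * V_s for all r, s, then the matrix R(c) := Φ*(1)^{-1/2} * Φ*(c) * Φ*(1)^{-1/2} satisfies the recovery equation R(c) * V_r = V_r * c for every r, and consequently Φ(R(c)) = c. -/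
open Matrix
open scoped ComplexOrder

/-!
Since `c` commutes with every `V_rᴴ V_s`, one has `Φ*(c) V_r = Φ*(1) V_r c`; multiplying on the
right by `V_rᴴ` and summing shows that `Φ*(c)` commutes with `Φ*(1)`, hence with its square root
`S`, a continuous function of `Φ*(1)`, and with `S⁻¹`. Therefore
`S⁻¹ Φ*(c) S⁻¹ V_r = S⁻² Φ*(c) V_r = V_r c`, and `Φ(R(c)) = ∑ V_rᴴ V_r c = c`.
-/

theorem Commute.ringInverse_right {M₀ : Type*} [MonoidWithZero M₀] {a b : M₀} (h : Commute a b) :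
    Commute a (Ring.inverse b) := by
  by_cases hb : IsUnit b
  · obtain ⟨u, rfl⟩ := hb
    rw [Ring.inverse_unit]
    exact h.units_inv_right
  · rw [Ring.inverse_non_unit _ hb]
    exact Commute.zero_right a

namespace Matrix

section Sqrt

variable {ι 𝕜 : Type*} [Fintype ι] [DecidableEq ι] [RCLike 𝕜] {A : Matrix ι ι 𝕜}

theorem PosSemidef.sqrt_eq_cfc (hA : A.PosSemidef) : hA.sqrt = cfc Real.sqrt A := by
  rw [hA.1.cfc_eq, IsHermitian.cfc, Unitary.conjStarAlgAut_apply]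
  rfl

open scoped MatrixOrder in
theorem PosSemidef.sqrt_mul_self (hA : A.PosSemidef) : hA.sqrt * hA.sqrt = A := by
  rw [hA.sqrt_eq_cfc, ← cfc_mul Real.sqrt Real.sqrt A]
  conv_rhs => rw [← cfc_id' ℝ A]
  exact cfc_congr fun x hx => Real.mul_self_sqrt (spectrum_nonneg_of_nonneg hA.nonneg hx)

theorem PosSemidef.commute_sqrt {B : Matrix ι ι 𝕜} (hA : A.PosSemidef) (h : Commute B A) :
    Commute B hA.sqrt := by
  rw [hA.sqrt_eq_cfc]
  exact (h.symm.cfc_real Real.sqrt).symm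

theorem PosDef.isUnit_sqrt (hA : A.PosDef) : IsUnit hA.posSemidef.sqrt := by
  have h := hA.isUnit
  rw [← hA.posSemidef.sqrt_mul_self] at h
  exact ((Commute.refl _).isUnit_mul_iff.mp h).1

end Sqrt

section Kraus

variable {ι n m α : Type*} [Fintype ι] [Fintype n] [Fintype m]

theorem sum_mul_mul_conjTranspose_mul_of_commute [Semiring α] [Star α]
    {V : ι → Matrix n m α} {c : Matrix m m α} (hc : ∀ r s, Commute c ((V r)ᴴ * V s)) (r : ι) :
    (∑ s, V s * c * (V s)ᴴ) * V r = (∑ s, V s * (V s)ᴴ) * (V r * c) := by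
  simp only [Matrix.sum_mul]
  refine Finset.sum_congr rfl fun s _ => ?_
  rw [Matrix.mul_assoc, Matrix.mul_assoc, (hc s r).eq]
  simp only [Matrix.mul_assoc]

theorem commute_sum_mul_mul_conjTranspose_of_commute [Semiring α] [Star α]
    {V : ι → Matrix n m α} {c : Matrix m m α} (hc : ∀ r s, Commute c ((V r)ᴴ * V s)) :
    Commute (∑ s, V s * c * (V s)ᴴ) (∑ s, V s * (V s)ᴴ) := by
  simp only [Commute, SemiconjBy, Matrix.mul_sum]
  refine Finset.sum_congr rfl fun r _ => ?_
  rw [← Matrix.mul_assoc, sum_mul_mul_conjTranspose_mul_of_commute hc r]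
  simp only [Matrix.mul_assoc]

theorem sum_conjTranspose_mul_mul_eq_of_mul_eq [DecidableEq m] [Semiring α] [Star α]
    {V : ι → Matrix n m α} (hV : ∑ r, (V r)ᴴ * V r = 1) {R : Matrix n n α} {c : Matrix m m α}
    (hR : ∀ r, R * V r = V r * c) : ∑ r, (V r)ᴴ * R * V r = c := by
  calc ∑ r, (V r)ᴴ * R * V r = ∑ r, (V r)ᴴ * V r * c := by
        simp only [Matrix.mul_assoc, hR]
    _ = c := by rw [← Matrix.sum_mul, hV, Matrix.one_mul]

end Kraus

theorem nonsing_inv_mul_mul_nonsing_inv_mul_eq {n m α : Type*} [Fintype n] [DecidableEq n]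
    [CommRing α] {S X : Matrix n n α} {W Y : Matrix n m α} (hS : IsUnit S) (hXS : Commute X S)
    (h : X * W = S * S * Y) : S⁻¹ * X * S⁻¹ * W = Y := by
  have hSd : IsUnit S.det := (isUnit_iff_isUnit_det S).mp hS
  have hXS' : Commute X S⁻¹ := by
    rw [nonsing_inv_eq_ringInverse]
    exact hXS.ringInverse_right
  rw [Matrix.mul_assoc S⁻¹, hXS'.eq, Matrix.mul_assoc, Matrix.mul_assoc, h,
    Matrix.mul_assoc, nonsing_inv_mul_cancel_left S _ hSd, nonsing_inv_mul_cancel_left S _ hSd]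

end Matrix

/-- If `c` commutes with all `V_rᴴ V_s`, the canonical recovery map
`R(c) = Φ*(1)^{-1/2} Φ*(c) Φ*(1)^{-1/2}` satisfies the recovery equation
`R(c) V_r = V_r c`, and hence `Φ(R(c)) = c`. -/
theorem recovery_map_satisfies_recovery_equation
    {n m k : ℕ} (V : Fin k → Matrix (Fin n) (Fin m) ℂ)
    (hV : ∑ r, (V r)ᴴ * V r = 1)
    (hT : (∑ r, V r * (V r)ᴴ).PosDef)
    (c : Matrix (Fin m) (Fin m) ℂ)
    (hc : ∀ r s, c * ((V r)ᴴ * V s) = ((V r)ᴴ * V s) * c) :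
    (∀ r, ((hT.posSemidef.sqrt)⁻¹ * (∑ s, V s * c * (V s)ᴴ) * (hT.posSemidef.sqrt)⁻¹)
        * V r = V r * c) ∧
    (∑ r, (V r)ᴴ *
        ((hT.posSemidef.sqrt)⁻¹ * (∑ s, V s * c * (V s)ᴴ) * (hT.posSemidef.sqrt)⁻¹)
        * V r) = c := by
  have hrec : ∀ r, ((hT.posSemidef.sqrt)⁻¹ * (∑ s, V s * c * (V s)ᴴ) *
      (hT.posSemidef.sqrt)⁻¹) * V r = V r * c := fun r =>
    nonsing_inv_mul_mul_nonsing_inv_mul_eq hT.isUnit_sqrt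
      (hT.posSemidef.commute_sqrt (commute_sum_mul_mul_conjTranspose_of_commute hc))
      (by rw [hT.posSemidef.sqrt_mul_self]; exact sum_mul_mul_conjTranspose_mul_of_commute hc r)
  exact ⟨hrec, sum_conjTranspose_mul_mul_eq_of_mul_eq hV hrec⟩
end

section
/- Let V_1, …, V_k be complex n × m matrices with Σ_{r=1}^k V_rᴴ * V_r = 1_m. Suppose c ∈ Matrix m m ℂ and X ∈ Matrix n n ℂ satisfy the recovery equations X * V_r = V_r * c and Xᴴ * V_r = V_r * cᴴ for every r. Then Σ_r V_rᴴ * X * V_r = c, and c commutes with V_rᴴ * V_s for all r, s. -/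
open Matrix

namespace Matrix

variable {α m n : Type*} [Fintype m] [Fintype n]

theorem conjTranspose_mul_eq_mul_conjTranspose [Semiring α] [StarRing α]
    {V : Matrix n m α} {X : Matrix n n α} {c : Matrix m m α} (h : Xᴴ * V = V * cᴴ) :
    Vᴴ * X = c * Vᴴ := by
  simpa only [conjTranspose_mul, conjTranspose_conjTranspose] using congrArg conjTranspose h

theorem commute_mul_of_intertwining [Semiring α]
    {A : Matrix m n α} {B : Matrix n m α} {X : Matrix n n α} {c : Matrix m m α}
    (hA : A * X = c * A) (hB : X * B = B * c) : c * (A * B) = A * B * c := by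
  rw [← Matrix.mul_assoc, ← hA, Matrix.mul_assoc, hB, Matrix.mul_assoc]

theorem sum_mul_mul_of_intertwining [Semiring α] {ι : Type*} [Fintype ι]
    (A : ι → Matrix m n α) {B : ι → Matrix n m α} {X : Matrix n n α} {c : Matrix m m α}
    (hB : ∀ r, X * B r = B r * c) : ∑ r, A r * X * B r = (∑ r, A r * B r) * c := by
  simp only [Matrix.mul_assoc, hB, Finset.sum_mul]

end Matrix

/-- If `X` satisfies the recovery equations `X V_r = V_r c` and `Xᴴ V_r = V_r cᴴ`, then
`Φ(X) = c` and `c` commutes with `V_rᴴ V_s` for all `r, s`. -/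
theorem recovery_equation_consequences
    {n m k : ℕ} (V : Fin k → Matrix (Fin n) (Fin m) ℂ)
    (hV : ∑ r, (V r)ᴴ * V r = 1)
    (c : Matrix (Fin m) (Fin m) ℂ) (X : Matrix (Fin n) (Fin n) ℂ)
    (hX : ∀ r, X * V r = V r * c)
    (hXstar : ∀ r, Xᴴ * V r = V r * cᴴ) :
    (∑ r, (V r)ᴴ * X * V r) = c ∧
    ∀ r s, c * ((V r)ᴴ * V s) = ((V r)ᴴ * V s) * c := by
  refine ⟨?_, fun r s => ?_⟩
  · rw [sum_mul_mul_of_intertwining _ hX, hV, Matrix.one_mul]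
  · exact commute_mul_of_intertwining (conjTranspose_mul_eq_mul_conjTranspose (hXstar r)) (hX s)
end
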